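/- If X_A and X_B are conditionally independent given X_C, and for each j ∈ A the conditional distribution of (X_A, X̃_A) given X_C is invariant under swapping coordinate j, and (X_A, X̃_A) is conditionally independent of (X_B, X̃_B) given X_C, then for each j ∈ A, the conditional distribution of (X_A, X_B, X̃_A, X̃_B) given X_C is invariant under swapping X_j and X̃_j. -/

import Mathlib

open MeasureTheory ProbabilityTheory

/-- Restriction of a vector-valued map to the coordinates in `D`. -/
def restr {Ω : Type*} {p : ℕ} (D : Finset (Fin p)) (X : Ω → Fin p → ℝ) :
    Ω → {i : Fin p // i ∈ D} → ℝ :=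
  fun ω i => X ω i

/-- Swap the coordinate `j ∈ D` of a pair of `D`-indexed vectors. -/
noncomputable def swapBlock {p : ℕ} (D : Finset (Fin p)) (j : Fin p)
    (hj : j ∈ D) :
    (({i : Fin p // i ∈ D} → ℝ) × ({i : Fin p // i ∈ D} → ℝ)) →
      (({i : Fin p // i ∈ D} → ℝ) × ({i : Fin p // i ∈ D} → ℝ)) :=
  fun z => (Function.update z.1 ⟨j, hj⟩ (z.2 ⟨j, hj⟩),
            Function.update z.2 ⟨j, hj⟩ (z.1 ⟨j, hj⟩))

lemma measurable_restr {Ω : Type*} [MeasurableSpace Ω] {p : ℕ} (D : Finset (Fin p))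
    {X : Ω → Fin p → ℝ} (hX : Measurable X) : Measurable (restr D X) :=
  measurable_pi_lambda _ fun i => (measurable_pi_apply (i : Fin p)).comp hX

lemma measurable_swapBlock {p : ℕ} (D : Finset (Fin p)) (j : Fin p) (hj : j ∈ D) :
    Measurable (swapBlock D j hj) := by
  refine Measurable.prodMk ?_ ?_ <;> refine measurable_pi_lambda _ fun i => ?_ <;>
    simp only [Function.update_apply] <;> split_ifs <;> fun_prop

theorem map_prod_comp_eq_of_condIndepFun {Ω γ β β' : Type*} [MeasurableSpace Ω]
    [StandardBorelSpace Ω] [MeasurableSpace γ] [MeasurableSpace β] [StandardBorelSpace β]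
    [Nonempty β] [MeasurableSpace β'] [StandardBorelSpace β'] [Nonempty β']
    {μ : Measure Ω} [IsFiniteMeasure μ] {k : Ω → γ} (hk : Measurable k) {f : Ω → β}
    {g : Ω → β'} (hf : Measurable f) (hg : Measurable g) {φ : β → β} (hφ : Measurable φ)
    (hfg : f ⟂ᵢ[k, hk; μ] g)
    (hlaw : μ.map (fun ω => (k ω, φ (f ω))) = μ.map (fun ω => (k ω, f ω))) :
    μ.map (fun ω => (k ω, φ (f ω), g ω)) = μ.map (fun ω => (k ω, f ω, g ω)) := by
  have hφfg : (φ ∘ f) ⟂ᵢ[k, hk; μ] g := hfg.comp hφ measurable_id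
  have hcond : condDistrib (φ ∘ f) k μ =ᵐ[μ.map k] condDistrib f k μ :=
    condDistrib_ae_eq_of_measure_eq_compProd k (hφ.comp hf).aemeasurable
      (hlaw.trans (compProd_map_condDistrib hf.aemeasurable).symm)
  change μ.map (fun ω => (k ω, (φ ∘ f) ω, g ω)) = _
  rw [(condIndepFun_iff_map_prod_eq_prod_condDistrib_prod_condDistrib (hφ.comp hf) hg hk).1
      hφfg, (condIndepFun_iff_map_prod_eq_prod_condDistrib_prod_condDistrib hf hg hk).1 hfg]
  -- both sides are now `(μ.map k)` bound against a product kernel, whose first factors agree a.e.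
  refine Measure.comp_congr ?_
  filter_upwards [hcond] with c hc
  simp only [Kernel.prod_apply, hc]

theorem stmt12_general {Ω : Type*} [MeasurableSpace Ω] [StandardBorelSpace Ω]
    (μ : Measure Ω) [IsProbabilityMeasure μ] {p : ℕ}
    (A B C : Finset (Fin p))
    (X Xt : Ω → Fin p → ℝ) (hX : Measurable X) (hXt : Measurable Xt)
    (hXC : Measurable (restr C X))
    (hCIknock : CondIndepFun
      (MeasurableSpace.comap (restr C X) inferInstance)
      (MeasurableSpace.comap_le_iff_le_map.2 hXC.le_map)
      (fun ω => (restr A X ω, restr A Xt ω))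
      (fun ω => (restr B X ω, restr B Xt ω)) μ)
    (hswapA : ∀ (j : Fin p) (hj : j ∈ A),
      μ.map (fun ω => (restr C X ω,
          swapBlock A j hj (restr A X ω, restr A Xt ω))) =
        μ.map (fun ω => (restr C X ω, (restr A X ω, restr A Xt ω)))) :
    ∀ (j : Fin p) (hj : j ∈ A),
      μ.map (fun ω => (restr C X ω,
          swapBlock A j hj (restr A X ω, restr A Xt ω),
          restr B X ω, restr B Xt ω)) =
        μ.map (fun ω => (restr C X ω,
          (restr A X ω, restr A Xt ω),
          restr B X ω, restr B Xt ω)) := fun j hj =>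
  map_prod_comp_eq_of_condIndepFun hXC
    ((measurable_restr A hX).prodMk (measurable_restr A hXt))
    ((measurable_restr B hX).prodMk (measurable_restr B hXt))
    (measurable_swapBlock A j hj) hCIknock (hswapA j hj)

/-- If `X_A ⊥ X_B | X_C`, the conditional law of `(X_A, X̃_A)` given `X_C` is
invariant under swapping any coordinate `j ∈ A`, and
`(X_A, X̃_A) ⊥ (X_B, X̃_B) | X_C`, then for each `j ∈ A` the conditional law of
`(X_A, X_B, X̃_A, X̃_B)` given `X_C` (encoded here by the joint law together
with `X_C`) is invariant under swapping `X_j` and `X̃_j`. -/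
theorem stmt12 {Ω : Type*} [MeasurableSpace Ω] [StandardBorelSpace Ω]
    (μ : Measure Ω) [IsProbabilityMeasure μ] {p : ℕ}
    (A B C : Finset (Fin p))
    (hAB : Disjoint A B) (hAC : Disjoint A C) (hBC : Disjoint B C)
    (X Xt : Ω → Fin p → ℝ) (hX : Measurable X) (hXt : Measurable Xt)
    (hXC : Measurable (restr C X))
    (hCI : CondIndepFun (MeasurableSpace.comap (restr C X) inferInstance)
      (MeasurableSpace.comap_le_iff_le_map.2 hXC.le_map)
      (restr A X) (restr B X) μ)
    (hCIknock : CondIndepFun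
      (MeasurableSpace.comap (restr C X) inferInstance)
      (MeasurableSpace.comap_le_iff_le_map.2 hXC.le_map)
      (fun ω => (restr A X ω, restr A Xt ω))
      (fun ω => (restr B X ω, restr B Xt ω)) μ)
    (hswapA : ∀ (j : Fin p) (hj : j ∈ A),
      μ.map (fun ω => (restr C X ω,
          swapBlock A j hj (restr A X ω, restr A Xt ω))) =
        μ.map (fun ω => (restr C X ω, (restr A X ω, restr A Xt ω)))) :
    ∀ (j : Fin p) (hj : j ∈ A),
      μ.map (fun ω => (restr C X ω,
          swapBlock A j hj (restr A X ω, restr A Xt ω),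
          restr B X ω, restr B Xt ω)) =
        μ.map (fun ω => (restr C X ω,
          (restr A X ω, restr A Xt ω),
          restr B X ω, restr B Xt ω)) :=
  stmt12_general μ A B C X Xt hX hXt hXC hCIknock hswapA
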